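/- Let c > 1 and A > 0 be constants such that every set S of an even number of points in the plane in general position satisfies sc(S) ≤ A · c^{|S|}. Then there is a constant A' > 0 such that sc(S) ≤ A' · c^{|S|} also holds for every set S of an odd number of points in the plane in general position. -/

import Mathlib

open scoped Classical

noncomputable section

/-- Points of the plane. -/
abbrev Pt : Type := ℝ × ℝ

/-- A finite point set is in general position if no three of its points are collinear. -/
def GenPos (S : Finset Pt) : Prop :=
  ∀ p ∈ S, ∀ q ∈ S, ∀ r ∈ S, p ≠ q → p ≠ r → q ≠ r →
    ¬ Collinear ℝ ({p, q, r} : Set Pt)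

/-- The closed straight segment spanned by an unordered pair of points. -/
def seg2 (e : Sym2 Pt) : Set Pt :=
  Sym2.lift ⟨fun p q => segment ℝ p q, fun p q => segment_symm ℝ p q⟩ e

/-- A crossing-free straight-edge graph (plane graph) on the point set `S`:
its edges are straight segments between points of `S`, any two of which
meet only at shared endpoints. -/
structure PlaneGraph (S : Finset Pt) where
  edges : Finset (Sym2 Pt)
  endpoint_mem : ∀ e ∈ edges, ∀ p, p ∈ e → p ∈ S
  not_isDiag : ∀ e ∈ edges, ¬ e.IsDiag
  noncrossing : ∀ e₁ ∈ edges, ∀ e₂ ∈ edges, e₁ ≠ e₂ →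
    ∀ x ∈ seg2 e₁ ∩ seg2 e₂, x ∈ e₁ ∧ x ∈ e₂

/-- A triangulation of `S` is a maximal plane graph on `S`. -/
def IsTriangulation {S : Finset Pt} (T : PlaneGraph S) : Prop :=
  ∀ G : PlaneGraph S, T.edges ⊆ G.edges → G.edges = T.edges

/-- `tr S`: the number of triangulations of `S`. -/
def triCount (S : Finset Pt) : ℕ :=
  Nat.card {T : PlaneGraph S // IsTriangulation T}

/-- A plane graph is a spanning cycle of `S` if its edges form a Hamiltonian
cycle on `S`. -/
def IsSpanningCycle {S : Finset Pt} (G : PlaneGraph S) : Prop :=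
  3 ≤ S.card ∧ ∃ f : Fin S.card ≃ {p : Pt // p ∈ S},
    G.edges =
      Finset.image (fun i : Fin S.card => s(((f i : Pt)), ((f (finRotate S.card i) : Pt)))) Finset.univ

/-- `sc S`: the number of crossing-free straight-edge spanning cycles of `S`. -/
def scCount (S : Finset Pt) : ℕ :=
  Nat.card {G : PlaneGraph S // IsSpanningCycle G}

/-- A plane graph is a perfect matching of `S` if every point of `S` is incident
to exactly one edge. -/
def IsPerfectMatching {S : Finset Pt} (G : PlaneGraph S) : Prop :=
  ∀ p ∈ S, ∃! e, e ∈ G.edges ∧ p ∈ e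

/-- `pm S`: the number of crossing-free straight-edge perfect matchings of `S`. -/
def pmCount (S : Finset Pt) : ℕ :=
  Nat.card {G : PlaneGraph S // IsPerfectMatching G}

/-- The support of a plane graph `G` on `S`: the number of triangulations of `S`
containing all edges of `G`. -/
def supp {S : Finset Pt} (G : PlaneGraph S) : ℕ :=
  Nat.card {T : PlaneGraph S // IsTriangulation T ∧ G.edges ⊆ T.edges}

/-- A finite set of points is in (strictly) convex position. -/
def InConvexPosition (Q : Finset Pt) : Prop :=
  ∀ p ∈ Q, p ∉ convexHull ℝ (↑(Q.erase p) : Set Pt)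

/-- `p q` is an edge of the convex hull boundary of `Q`. -/
def IsHullEdgeOf (Q : Finset Pt) (p q : Pt) : Prop :=
  p ∈ Q ∧ q ∈ Q ∧ p ≠ q ∧
    segment ℝ p q ⊆ frontier (convexHull ℝ (Q : Set Pt))

/-- `e` is a diagonal of the convex polygon with vertex set `Q`. -/
def IsDiagonalOf (Q : Finset Pt) (e : Sym2 Pt) : Prop :=
  ∃ p ∈ Q, ∃ q ∈ Q, e = s(p, q) ∧
    openSegment ℝ p q ⊆ interior (convexHull ℝ (Q : Set Pt))

/-- `F` is a set of ps-flippable (pseudo-simultaneously flippable) edges of the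
triangulation `T`: the edges of `F` are diagonals of pairwise interior-disjoint
(empty) convex polygons whose boundary edges all belong to `T`. -/
def IsPsFlippable {S : Finset Pt} (T : PlaneGraph S) (F : Finset (Sym2 Pt)) : Prop :=
  F ⊆ T.edges ∧
  ∃ 𝒬 : Finset (Finset Pt),
    (∀ Q ∈ 𝒬, ↑Q ⊆ (S : Set Pt) ∧ 3 ≤ Q.card ∧ InConvexPosition Q ∧
      (∀ p q, IsHullEdgeOf Q p q → s(p, q) ∈ T.edges) ∧
      (∀ p ∈ S, p ∉ interior (convexHull ℝ (Q : Set Pt)))) ∧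
    (∀ Q ∈ 𝒬, ∀ Q' ∈ 𝒬, Q ≠ Q' →
      interior (convexHull ℝ (Q : Set Pt)) ∩ interior (convexHull ℝ (Q' : Set Pt)) = ∅) ∧
    (∀ e ∈ F, ∃ Q ∈ 𝒬, IsDiagonalOf Q e)

/-- The drawing of a plane graph: the union of its (closed) edge segments and
its vertex set. -/
def drawing {S : Finset Pt} (G : PlaneGraph S) : Set Pt :=
  (⋃ e ∈ G.edges, seg2 e) ∪ (S : Set Pt)

/-- A convex decomposition of `S`: a plane graph containing all convex hull
boundary edges, whose bounded faces are all convex, and with no isolated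
vertices. -/
def IsConvexDecomposition {S : Finset Pt} (D : PlaneGraph S) : Prop :=
  (∀ p q, IsHullEdgeOf S p q → s(p, q) ∈ D.edges) ∧
  (∀ x ∉ drawing D, Bornology.IsBounded (connectedComponentIn (drawing D)ᶜ x) →
    Convex ℝ (connectedComponentIn (drawing D)ᶜ x)) ∧
  (∀ p ∈ S, ∃ e ∈ D.edges, p ∈ e)

/-- `p` is an interior vertex of `S` (not on the convex hull boundary). -/
def InteriorVtx (S : Finset Pt) (p : Pt) : Prop :=
  p ∈ S ∧ p ∉ frontier (convexHull ℝ (S : Set Pt))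

/-- `p` has a valid triple of edges in `G`. -/
def IsValidAt {S : Finset Pt} (G : PlaneGraph S) (p : Pt) : Prop :=
  ∃ a ∈ S, ∃ b ∈ S, ∃ c ∈ S,
    p ∈ convexHull ℝ ({a, b, c} : Set Pt) ∧
    s(p, a) ∈ G.edges ∧ s(p, b) ∈ G.edges ∧ s(p, c) ∈ G.edges

/-- The degree of a point in a plane graph. -/
def degree {S : Finset Pt} (G : PlaneGraph S) (p : Pt) : ℕ :=
  (G.edges.filter (fun e => p ∈ e)).card

/-- `a b c` span a triangular face of the triangulation `T`. -/
def IsTriFace {S : Finset Pt} (T : PlaneGraph S) (a b c : Pt) : Prop :=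
  a ∈ S ∧ b ∈ S ∧ c ∈ S ∧
  s(a, b) ∈ T.edges ∧ s(b, c) ∈ T.edges ∧ s(a, c) ∈ T.edges ∧
  ∀ p ∈ S, p ∉ interior (convexHull ℝ ({a, b, c} : Set Pt))

/-- An edge of a triangulation is flippable if its two incident triangles form
a convex quadrilateral. -/
def IsFlippable {S : Finset Pt} (T : PlaneGraph S) (e : Sym2 Pt) : Prop :=
  e ∈ T.edges ∧ ∃ a b c d : Pt, e = s(a, b) ∧ c ≠ d ∧
    IsTriFace T a b c ∧ IsTriFace T a b d ∧
    (openSegment ℝ a b ∩ openSegment ℝ c d).Nonempty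

/-- `flip T`: the number of flippable edges of `T`. -/
def flipCount {S : Finset Pt} (T : PlaneGraph S) : ℕ :=
  (T.edges.filter (fun e => IsFlippable T e)).card

/-- `v3 T`: the number of interior vertices of degree 3 in `T`. -/
def v3 {S : Finset Pt} (T : PlaneGraph S) : ℕ :=
  (S.filter (fun p => p ∉ frontier (convexHull ℝ (S : Set Pt)) ∧ degree T p = 3)).card

/-- The number of vertices of `S` on its convex hull boundary. -/
def hullVtxCount (S : Finset Pt) : ℕ :=
  (S.filter (fun p => p ∈ frontier (convexHull ℝ (S : Set Pt)))).card

/-! A point `x` can be added to `S`, keeping general position, without decreasing the number of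
spanning cycles; for odd `|S|` the bound for the even set `S ∪ {x}` then gives
`sc(S) ≤ A c^{|S|+1}`.

Let `p ∈ S` be the unique maximiser of a generic linear form `ℓ` and put `x = p + εw` with
`ℓ w > 0` and `ε > 0` small. In a plane spanning cycle of `S` the point `p` has two neighbours
`a, b`; as `p, a, b` are not collinear and `x ≠ p`, the segments `xa, pb` and `xb, pa` cannot both
cross, so for one neighbour `q` (the other being `o`) the segment `xq` misses `po`. Replacing the
edge `pq` by the path `p x q` gives a plane spanning cycle of `S ∪ {x}`: `px` lies in the
half-plane `ℓ ≥ ℓ p`, which meets no edge avoiding `p`, and for small `ε` the segment `xq` misses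
every segment that `pq` misses. The old cycle is recovered from the new one, since `q` is the
neighbour of `x` other than `p`. -/

open Filter Topology

section Segments

variable {E : Type*} [AddCommGroup E] [Module ℝ E]

lemma eq_zero_of_smul_sub_add_smul_sub_eq_zero {p a b : E}
    (h : ¬ Collinear ℝ ({p, a, b} : Set E)) {s t : ℝ}
    (hst : s • (a - p) + t • (b - p) = 0) : s = 0 ∧ t = 0 := by
  by_contra hne
  apply h
  rcases eq_or_ne s 0 with rfl | hs
  · have hbp : b = p := by
      have ht : t ≠ 0 := by tauto
      simpa [ht, sub_eq_zero] using hst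
    simpa [hbp, Set.pair_comm] using collinear_pair ℝ p a
  · have ha : a = AffineMap.lineMap p b (-t / s) := by
      rw [AffineMap.lineMap_apply, vsub_eq_sub, vadd_eq_add]
      have : a - p = (-t / s) • (b - p) := by
        rw [← smul_right_inj hs, smul_smul, mul_div_cancel₀ (-t) hs, neg_smul]
        exact eq_neg_of_add_eq_zero_left hst
      rw [← this, sub_add_cancel]
    have := collinear_insert_of_mem_affineSpan_pair (k := ℝ)
      (ha ▸ AffineMap.lineMap_mem_affineSpan_pair (-t / s) p b)
    rwa [Set.insert_comm] at this

lemma mem_segment_iff_sub {x y z : E} :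
    z ∈ segment ℝ x y ↔ ∃ t ∈ Set.Icc (0 : ℝ) 1, z - x = t • (y - x) := by
  rw [segment_eq_image']
  exact ⟨fun ⟨t, ht, hz⟩ => ⟨t, ht, by rw [← hz, add_sub_cancel_left]⟩,
    fun ⟨t, ht, hz⟩ => ⟨t, ht, show x + t • (y - x) = z by rw [← hz, add_sub_cancel]⟩⟩

lemma eq_of_mem_segment_of_mem_segment {p a b y : E} (h : ¬ Collinear ℝ ({p, a, b} : Set E))
    (ha : y ∈ segment ℝ p a) (hb : y ∈ segment ℝ p b) : y = p := by
  obtain ⟨t, -, hta⟩ := mem_segment_iff_sub.1 ha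
  obtain ⟨s, -, hsb⟩ := mem_segment_iff_sub.1 hb
  have ht := (eq_zero_of_smul_sub_add_smul_sub_eq_zero h
    (s := t) (t := -s) (by rw [← hta, neg_smul, ← hsb, add_neg_cancel])).1
  rwa [ht, zero_smul, sub_eq_zero] at hta

lemma disjoint_segment_or_disjoint_segment {p a b x : E}
    (h : ¬ Collinear ℝ ({p, a, b} : Set E)) (hx : x ≠ p) :
    Disjoint (segment ℝ x a) (segment ℝ p b) ∨ Disjoint (segment ℝ x b) (segment ℝ p a) := by
  -- Each crossing is an affine relation between `x - p`, `a - p`, `b - p`. Eliminating `x - p`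
  -- leaves a relation between `a - p` and `b - p` whose coefficients are sums of nonnegative
  -- terms, so all of them vanish, which forces `x = p`.
  by_contra! hcross
  obtain ⟨⟨y, hya, hyb⟩, ⟨z, hzb, hza⟩⟩ :=
    And.imp Set.not_disjoint_iff.1 Set.not_disjoint_iff.1 hcross
  obtain ⟨t, ⟨ht0, ht1⟩, hy₁⟩ := mem_segment_iff_sub.1 hya
  obtain ⟨s, ⟨hs0, -⟩, hy₂⟩ := mem_segment_iff_sub.1 hyb
  obtain ⟨t', ⟨ht0', ht1'⟩, hz₁⟩ := mem_segment_iff_sub.1 hzb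
  obtain ⟨s', ⟨hs0', -⟩, hz₂⟩ := mem_segment_iff_sub.1 hza
  have hI : (1 - t) • (x - p) + t • (a - p) = s • (b - p) := by
    linear_combination (norm := module) hy₂ - hy₁
  have hII : (1 - t') • (x - p) + t' • (b - p) = s' • (a - p) := by
    linear_combination (norm := module) hz₂ - hz₁
  have hindep : ∀ {c d : ℝ}, c • (a - p) + d • (b - p) = 0 → c = 0 ∧ d = 0 :=
    eq_zero_of_smul_sub_add_smul_sub_eq_zero h
  have ht : t < 1 := by
    refine ht1.lt_of_ne fun ht => ?_
    subst ht
    have := (hindep (c := 1) (d := -s) (by linear_combination (norm := module) hI)).1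
    norm_num at this
  have ht' : t' < 1 := by
    refine ht1'.lt_of_ne fun ht => ?_
    subst ht
    have := (hindep (c := -s') (d := 1) (by linear_combination (norm := module) hII)).2
    norm_num at this
  obtain ⟨hA, hB⟩ := hindep (c := (1 - t') * t + (1 - t) * s') (d := -((1 - t) * t' + (1 - t') * s))
    (by linear_combination (norm := module) (1 - t') • hI - (1 - t) • hII)
  have ht_eq : t = 0 := by nlinarith [mul_nonneg (sub_nonneg.2 ht.le) hs0']
  have hs_eq : s = 0 := by nlinarith [mul_nonneg (sub_nonneg.2 ht.le) ht0']
  apply hx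
  simpa [ht_eq, hs_eq, sub_eq_zero] using hI

lemma disjoint_segment_of_lt {ℓ : E →ₗ[ℝ] ℝ} {p x u v : E} (hx : ℓ p ≤ ℓ x)
    (hu : ℓ u < ℓ p) (hv : ℓ v < ℓ p) :
    Disjoint (segment ℝ p x) (segment ℝ u v) := by
  have hpx : ∀ y ∈ segment ℝ p x, ℓ p ≤ ℓ y := fun _ hy =>
    (convex_halfSpace_ge ℓ.isLinear _).segment_subset (le_refl (ℓ p)) hx hy
  have huv : ∀ y ∈ segment ℝ u v, ℓ y < ℓ p := fun _ hy =>
    (convex_halfSpace_lt ℓ.isLinear _).segment_subset hu hv hy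
  exact Set.disjoint_left.2 fun y hy₁ hy₂ => (huv y hy₂).not_ge (hpx y hy₁)

lemma subsingleton_setOf_collinear {p w u v : E} (huv : u ≠ v) (hw : w ∉ ℝ ∙ (u - v)) :
    {ε : ℝ | Collinear ℝ ({p + ε • w, u, v} : Set E)}.Subsingleton := by
  intro ε₁ h₁ ε₂ h₂
  have hmem : ∀ ε ∈ {ε : ℝ | Collinear ℝ ({p + ε • w, u, v} : Set E)},
      p + ε • w ∈ line[ℝ, u, v] := fun ε h =>
    h.mem_affineSpan_of_mem_of_ne (by simp) (by simp) (by simp) huv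
  have hdir := AffineSubspace.vsub_mem_direction (hmem ε₁ h₁) (hmem ε₂ h₂)
  simp only [direction_affineSpan, vectorSpan_pair, vsub_eq_sub, add_sub_add_left_eq_sub,
    ← sub_smul] at hdir
  by_contra hne
  exact hw ((Submodule.smul_mem_iff _ (sub_ne_zero.2 hne)).1 hdir)

variable [TopologicalSpace E] [IsTopologicalAddGroup E] [ContinuousSMul ℝ E]

lemma isOpen_setOf_disjoint_segment {K : Set E} (hK : IsClosed K) (q : E) :
    IsOpen {y | Disjoint (segment ℝ y q) K} := by
  have hcl : IsClosed {z : E × unitInterval | AffineMap.lineMap z.1 q (z.2 : ℝ) ∈ K} :=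
    hK.preimage (by simp only [AffineMap.lineMap_apply_module]; fun_prop)
  rw [← isClosed_compl_iff]
  convert isClosedMap_fst_of_compactSpace _ hcl using 1
  ext y
  simp [Set.not_disjoint_iff, segment_eq_image_lineMap, unitInterval]

end Segments

lemma eventually_nhdsGT_notMem_of_finite {s : Set ℝ} (hs : s.Finite) :
    ∀ᶠ ε in 𝓝[>] 0, ε ∉ s :=
  (nhdsWithin_mono _ (fun _ h => ne_of_gt h)).trans (nhdsNE_le_cofinite 0) hs.compl_mem_cofinite

section Cycles

variable {α : Type*} [DecidableEq α]

def cycleEdges {n : ℕ} (g : Fin n → α) : Finset (Sym2 α) :=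
  Finset.univ.image fun i => s(g i, g (finRotate n i))

lemma mem_cycleEdges {n : ℕ} {g : Fin (n + 1) → α} {e : Sym2 α} :
    e ∈ cycleEdges g ↔ ∃ i, s(g i, g (i + 1)) = e := by
  simp [cycleEdges]

lemma cycleEdges_comp_add_right {n : ℕ} (g : Fin (n + 1) → α) (c : Fin (n + 1)) :
    cycleEdges (fun i => g (i + c)) = cycleEdges g := by
  ext e
  simp only [mem_cycleEdges, add_right_comm _ (1 : Fin (n + 1)) c]
  exact ((add_right_surjective c).exists (p := fun i => s(g i, g (i + 1)) = e)).symm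

def subdivide (E : Finset (Sym2 α)) (p q x : α) : Finset (Sym2 α) :=
  insert s(p, x) (insert s(x, q) (E.erase s(p, q)))

lemma subdivide_comm (E : Finset (Sym2 α)) (p q x : α) :
    subdivide E p q x = subdivide E q p x := by
  rw [subdivide, subdivide, Sym2.eq_swap (a := q) (b := p), Sym2.eq_swap (a := q) (b := x),
    Sym2.eq_swap (a := x) (b := p), Finset.insert_comm]

lemma filter_subdivide {E : Finset (Sym2 α)} {p q x : α} (hx : ∀ e ∈ E, x ∉ e) :
    (subdivide E p q x).filter (x ∉ ·) = E.erase s(p, q) := by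
  rw [subdivide, Finset.filter_insert, Finset.filter_insert, if_neg (by simp),
    if_neg (by simp), Finset.filter_true_of_mem fun e he => hx e (Finset.mem_of_mem_erase he)]

lemma eq_of_subdivide_eq {E₁ E₂ : Finset (Sym2 α)} {p q₁ q₂ x : α}
    (hx₁ : ∀ e ∈ E₁, x ∉ e) (hx₂ : ∀ e ∈ E₂, x ∉ e) (h₁ : s(p, q₁) ∈ E₁) (h₂ : s(p, q₂) ∈ E₂)
    (hq₁ : q₁ ≠ p) (h : subdivide E₁ p q₁ x = subdivide E₂ p q₂ x) : E₁ = E₂ := by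
  have hq : q₁ = q₂ := by
    have hmem : s(x, q₁) ∈ subdivide E₂ p q₂ x := h ▸ by simp [subdivide]
    simp only [subdivide, Finset.mem_insert, Finset.mem_erase, Sym2.eq_swap (a := p) (b := x),
      Sym2.congr_right] at hmem
    rcases hmem with hp | hq | ⟨-, hmem⟩
    · exact absurd hp hq₁
    · exact hq
    · exact absurd (Sym2.mem_mk_left x q₁) (hx₂ _ hmem)
  subst hq
  rw [← Finset.insert_erase h₁, ← Finset.insert_erase h₂, ← filter_subdivide hx₁,
    ← filter_subdivide hx₂, h]

lemma exists_adj_of_mem_range {n : ℕ} {g : Fin (n + 3) → α} (hg : Function.Injective g)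
    {p : α} (hp : p ∈ Set.range g) :
    ∃ a b, a ≠ b ∧ s(p, a) ∈ cycleEdges g ∧ s(p, b) ∈ cycleEdges g ∧
      ∀ e ∈ cycleEdges g, p ∈ e → e = s(p, a) ∨ e = s(p, b) := by
  obtain ⟨k, rfl⟩ := hp
  refine ⟨g (k + 1), g (k - 1), fun h => ?_, mem_cycleEdges.2 ⟨k, rfl⟩,
    mem_cycleEdges.2 ⟨k - 1, by rw [sub_add_cancel, Sym2.eq_swap]⟩, fun e he hke => ?_⟩
  · have h2 : (2 : Fin (n + 3)) = 0 :=
      calc (2 : Fin (n + 3)) = k + 1 - (k - 1) := by abel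
        _ = 0 := by rw [hg h, sub_self]
    simp [Fin.ext_iff, Nat.mod_eq_of_lt (show 2 < n + 3 by omega)] at h2
  · obtain ⟨i, rfl⟩ := mem_cycleEdges.1 he
    rcases Sym2.mem_iff.1 hke with hi | hi
    · exact Or.inl (by rw [hg hi])
    · obtain rfl := eq_sub_of_add_eq (hg hi.symm)
      rw [sub_add_cancel, Sym2.eq_swap]
      exact Or.inr rfl

lemma cycleEdges_snoc {n : ℕ} {g : Fin (n + 3) → α} (hg : Function.Injective g) (x : α) :
    cycleEdges (Fin.snoc g x : Fin (n + 4) → α) =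
      subdivide (cycleEdges g) (g (Fin.last _)) (g 0) x := by
  have hwrap : ∀ j, s(g j, g (j + 1)) = s(g (Fin.last _), g 0) → j = Fin.last _ := by
    intro j hj
    rcases Sym2.eq_iff.1 hj with ⟨h, -⟩ | ⟨h₁, h₂⟩
    · exact hg h
    · have h := hg h₂
      rw [hg h₁, zero_add] at h
      simp [Fin.ext_iff] at h
  have hrot : ∀ j : Fin (n + 3), j ≠ Fin.last _ →
      (j.castSucc + 1 : Fin (n + 4)) = (j + 1).castSucc := by
    intro j hj
    ext
    rw [Fin.val_add_one_of_lt (Fin.castSucc_lt_last j), Fin.val_castSucc, Fin.val_castSucc,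
      Fin.val_add_one_of_lt (Fin.lt_last_iff_ne_last.2 hj)]
  ext e
  simp only [mem_cycleEdges, subdivide, Finset.mem_insert, Finset.mem_erase]
  constructor
  · rintro ⟨i, rfl⟩
    induction i using Fin.lastCases with
    | last => simp [Fin.last_add_one]
    | cast j =>
      by_cases hj : j = Fin.last _
      · subst hj
        left
        simp [Fin.snoc_castSucc]
      · right; right
        rw [Fin.snoc_castSucc, hrot j hj, Fin.snoc_castSucc]
        exact ⟨fun h => hj (hwrap j h), j, rfl⟩
  · rintro (rfl | rfl | ⟨hne, j, rfl⟩)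
    · exact ⟨(Fin.last _).castSucc, by simp⟩
    · exact ⟨Fin.last _, by simp⟩
    · have hj : j ≠ Fin.last _ := by rintro rfl; simp [Fin.last_add_one] at hne
      exact ⟨j.castSucc, by simp [hrot j hj]⟩

lemma exists_cycleEdges_eq_subdivide {n : ℕ} {g : Fin (n + 3) → α} (hg : Function.Injective g)
    {x : α} (hx : x ∉ Set.range g) {p q : α} (hpq : s(p, q) ∈ cycleEdges g) :
    ∃ g' : Fin (n + 4) → α, Function.Injective g' ∧ Set.range g' = insert x (Set.range g) ∧
      cycleEdges g' = subdivide (cycleEdges g) p q x := by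
  obtain ⟨j, hj⟩ := mem_cycleEdges.1 hpq
  set g₁ : Fin (n + 3) → α := fun i => g (i + (j + 1))
  have hg₁ : Function.Injective g₁ := hg.comp (add_left_injective _)
  have hrange : Set.range g₁ = Set.range g := (add_right_surjective _).range_comp g
  have hends : s(g₁ (Fin.last _), g₁ 0) = s(p, q) := by
    simp only [g₁, ← hj, zero_add, add_comm j, ← add_assoc, Fin.last_add_one]
  refine ⟨Fin.snoc g₁ x, Fin.snoc_injective_of_injective hg₁ (hrange ▸ hx),
    by rw [Fin.range_snoc, hrange], ?_⟩
  rw [cycleEdges_snoc hg₁, cycleEdges_comp_add_right]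
  rcases Sym2.eq_iff.1 hends with ⟨hp, hq⟩ | ⟨hq, hp⟩
  · rw [hp, hq]
  · rw [hp, hq, subdivide_comm]

end Cycles

lemma isSpanningCycle_iff {S : Finset Pt} {G : PlaneGraph S} :
    IsSpanningCycle G ↔ ∃ (n : ℕ) (g : Fin (n + 3) → Pt), Function.Injective g ∧
      Set.range g = S ∧ G.edges = cycleEdges g := by
  constructor
  · rintro ⟨h3, f, hf⟩
    obtain ⟨n, hn⟩ : ∃ n, S.card = n + 3 := ⟨S.card - 3, by omega⟩
    revert f
    rw [hn]
    intro f hf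
    refine ⟨n, fun i => f i, Subtype.val_injective.comp f.injective, ?_, hf⟩
    change Set.range (Subtype.val ∘ f) = S
    rw [f.surjective.range_comp, Subtype.range_coe]
  · rintro ⟨n, g, hg, hrange, hedges⟩
    have hcard : S.card = n + 3 := by
      have hS : Finset.univ.image g = S := by
        apply Finset.coe_injective
        rw [Finset.coe_image, Finset.coe_univ, Set.image_univ, hrange]
      rw [← hS, Finset.card_image_of_injective _ hg, Finset.card_univ, Fintype.card_fin]
    refine ⟨by omega, ?_⟩
    rw [hcard]
    have hmem : ∀ i, g i ∈ S := fun i => by rw [← Finset.mem_coe, ← hrange]; exact ⟨i, rfl⟩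
    refine ⟨Equiv.ofBijective (fun i => ⟨g i, hmem i⟩) ⟨fun i j h => hg (congrArg Subtype.val h),
      fun ⟨y, hy⟩ => ?_⟩, hedges⟩
    obtain ⟨i, rfl⟩ : y ∈ Set.range g := by rw [hrange]; exact hy
    exact ⟨i, rfl⟩

namespace PlaneGraph

variable {S : Finset Pt}

lemma ext_edges {G H : PlaneGraph S} (h : G.edges = H.edges) : G = H := by
  cases G; cases H; congr

variable (G : PlaneGraph S) {u v : Pt}

lemma left_mem (h : s(u, v) ∈ G.edges) : u ∈ S :=
  G.endpoint_mem _ h u (Sym2.mem_mk_left _ _)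

lemma right_mem (h : s(u, v) ∈ G.edges) : v ∈ S :=
  G.endpoint_mem _ h v (Sym2.mem_mk_right _ _)

lemma ne_of_mem (h : s(u, v) ∈ G.edges) : u ≠ v :=
  fun huv => G.not_isDiag _ h (Sym2.mk_isDiag_iff.2 huv)

end PlaneGraph

instance (S : Finset Pt) : Finite (PlaneGraph S) :=
  Finite.of_injective (fun G : PlaneGraph S => (⟨G.edges, Finset.mem_powerset.2 fun e he =>
      Finset.mem_sym2_iff.2 (G.endpoint_mem e he)⟩ : S.sym2.powerset))
    fun _ _ h => PlaneGraph.ext_edges (congrArg Subtype.val h)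

def MeetsProperly (e₁ e₂ : Sym2 Pt) : Prop :=
  ∀ y ∈ seg2 e₁ ∩ seg2 e₂, y ∈ e₁ ∧ y ∈ e₂

def NonCrossing (E : Finset (Sym2 Pt)) : Prop :=
  ∀ e₁ ∈ E, ∀ e₂ ∈ E, e₁ ≠ e₂ → MeetsProperly e₁ e₂

lemma MeetsProperly.symm {e₁ e₂ : Sym2 Pt} (h : MeetsProperly e₁ e₂) : MeetsProperly e₂ e₁ :=
  fun y hy => (h y hy.symm).symm

lemma meetsProperly_of_disjoint {a b c d : Pt}
    (h : Disjoint (segment ℝ a b) (segment ℝ c d)) : MeetsProperly s(a, b) s(c, d) :=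
  fun _ hy => absurd h (Set.not_disjoint_iff.2 ⟨_, hy⟩)

lemma meetsProperly_of_not_collinear {p a b : Pt} (h : ¬ Collinear ℝ ({p, a, b} : Set Pt)) :
    MeetsProperly s(p, a) s(p, b) := by
  rintro y ⟨ha, hb⟩
  rw [eq_of_mem_segment_of_mem_segment h ha hb]
  exact ⟨Sym2.mem_mk_left _ _, Sym2.mem_mk_left _ _⟩

lemma MeetsProperly.disjoint {a b c d : Pt} (h : MeetsProperly s(a, b) s(c, d))
    (ha : a ∉ s(c, d)) (hb : b ∉ s(c, d)) : Disjoint (segment ℝ a b) (segment ℝ c d) := by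
  refine Set.disjoint_left.2 fun y hab hcd => ?_
  obtain ⟨hy, hy'⟩ := h y ⟨hab, hcd⟩
  rcases Sym2.mem_iff.1 hy with rfl | rfl
  exacts [ha hy', hb hy']

lemma NonCrossing.mono {E E' : Finset (Sym2 Pt)} (h : NonCrossing E) (hE : E' ⊆ E) :
    NonCrossing E' :=
  fun e₁ h₁ e₂ h₂ => h e₁ (hE h₁) e₂ (hE h₂)

lemma NonCrossing.insert {E : Finset (Sym2 Pt)} {e : Sym2 Pt} (h : NonCrossing E)
    (he : ∀ e' ∈ E, e' ≠ e → MeetsProperly e e') : NonCrossing (insert e E) := by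
  intro e₁ h₁ e₂ h₂ hne
  rw [Finset.mem_insert] at h₁ h₂
  rcases h₁ with rfl | h₁ <;> rcases h₂ with rfl | h₂
  · exact absurd rfl hne
  · exact he e₂ h₂ hne.symm
  · exact (he e₁ h₁ hne).symm
  · exact h e₁ h₁ e₂ h₂ hne

lemma GenPos.insert {S : Finset Pt} {x : Pt} (hS : GenPos S)
    (hx : ∀ u ∈ S, ∀ v ∈ S, u ≠ v → ¬ Collinear ℝ ({x, u, v} : Set Pt)) :
    GenPos (insert x S) := by
  intro a ha b hb c hc hab hac hbc
  rw [Finset.mem_insert] at ha hb hc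
  rcases ha with rfl | ha <;> rcases hb with rfl | hb <;> rcases hc with rfl | hc
  all_goals first
    | exact absurd rfl ‹_›
    | exact hS a ha b hb c hc hab hac hbc
    | exact hx b hb c hc hbc
    | (rw [Set.insert_comm]; exact hx a ha c hc hac)
    | (rw [Set.pair_comm, Set.insert_comm]; exact hx a ha b hb hab)

lemma exists_generic_direction (S : Finset Pt) :
    ∃ (ℓ : Pt →ₗ[ℝ] ℝ) (w : Pt), 0 < ℓ w ∧
      ∀ u ∈ S, ∀ v ∈ S, u ≠ v → ℓ u ≠ ℓ v ∧ w ∉ ℝ ∙ (u - v) := by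
  let ℓ : ℝ → Pt →ₗ[ℝ] ℝ := fun t => LinearMap.fst ℝ ℝ ℝ + t • LinearMap.snd ℝ ℝ ℝ
  have hℓ : ∀ t (y : Pt), ℓ t y = y.1 + t * y.2 := fun _ _ => rfl
  have hgen : ∀ d : Pt, d ≠ 0 → ∀ᶠ t in cofinite, ℓ t d ≠ 0 ∧ ((1, t) : Pt) ∉ ℝ ∙ d := by
    intro d hd
    refine (Filter.eventually_cofinite.2 (Set.Subsingleton.finite ?_)).and
      (Filter.eventually_cofinite.2 (Set.Subsingleton.finite ?_))
    · intro t₁ h₁ t₂ h₂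
      simp only [hℓ, Set.mem_ofPred_eq, not_not] at h₁ h₂
      have hd₂ : d.2 ≠ 0 := fun h => hd (Prod.ext (by simpa [h] using h₁) h)
      exact mul_right_cancel₀ hd₂ (by linarith)
    · intro t₁ h₁ t₂ h₂
      simp only [Set.mem_ofPred_eq, not_not, Submodule.mem_span_singleton] at h₁ h₂
      obtain ⟨a₁, h₁⟩ := h₁
      obtain ⟨a₂, h₂⟩ := h₂
      simp only [Prod.ext_iff, Prod.smul_fst, Prod.smul_snd, smul_eq_mul] at h₁ h₂
      have hd₁ : d.1 ≠ 0 := fun h => by simp [h] at h₁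
      have ha : a₁ = a₂ := mul_right_cancel₀ hd₁ (h₁.1.trans h₂.1.symm)
      rw [← h₁.2, ← h₂.2, ha]
  have hall : ∀ᶠ t in cofinite, ∀ u ∈ S, ∀ v ∈ S, u ≠ v →
      ℓ t (u - v) ≠ 0 ∧ ((1, t) : Pt) ∉ ℝ ∙ (u - v) := by
    simp only [Filter.eventually_all_finset, Filter.eventually_imp_distrib_left]
    exact fun u _ v _ huv => hgen _ (sub_ne_zero.2 huv)
  obtain ⟨t, ht⟩ := hall.exists
  refine ⟨ℓ t, (1, t), by rw [hℓ]; nlinarith [mul_self_nonneg t], fun u hu v hv huv =>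
    ⟨fun h => (ht u hu v hv huv).1 (by rw [map_sub, h, sub_self]), (ht u hu v hv huv).2⟩⟩

structure IsSplicePoint (S : Finset Pt) (p x : Pt) : Prop where
  mem : p ∈ S
  notMem : x ∉ S
  genPos : GenPos (insert x S)
  disjoint_left : ∀ u ∈ S, ∀ v ∈ S, u ≠ p → v ≠ p →
    Disjoint (segment ℝ p x) (segment ℝ u v)
  disjoint_right : ∀ q ∈ S, ∀ u ∈ S, ∀ v ∈ S, Disjoint (segment ℝ p q) (segment ℝ u v) →
    Disjoint (segment ℝ x q) (segment ℝ u v)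

lemma exists_isSplicePoint {S : Finset Pt} (hS : GenPos S) (hne : S.Nonempty) :
    ∃ p x, IsSplicePoint S p x := by
  obtain ⟨ℓ, w, hw, hgen⟩ := exists_generic_direction S
  obtain ⟨p, hp, hmax⟩ := S.exists_max_image ℓ hne
  have hlt : ∀ u ∈ S, u ≠ p → ℓ u < ℓ p := fun u hu hup =>
    (hmax u hu).lt_of_ne (hgen u hu p hp hup).1
  have hcol : ∀ u ∈ S, ∀ v ∈ S, u ≠ v →
      ∀ᶠ ε in 𝓝[>] (0 : ℝ), ¬ Collinear ℝ ({p + ε • w, u, v} : Set Pt) := fun u hu v hv huv =>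
    eventually_nhdsGT_notMem_of_finite
      (subsingleton_setOf_collinear huv (hgen u hu v hv huv).2).finite
  have hseg : ∀ q u v : Pt, Disjoint (segment ℝ p q) (segment ℝ u v) →
      ∀ᶠ ε in 𝓝[>] (0 : ℝ), Disjoint (segment ℝ (p + ε • w) q) (segment ℝ u v) := by
    intro q u v h
    have hclosed : IsClosed (segment ℝ u v) := by
      rw [segment_eq_image_lineMap]
      exact (isCompact_Icc.image AffineMap.lineMap_continuous).isClosed
    have hp : Tendsto (fun ε : ℝ => p + ε • w) (𝓝 0) (𝓝 (p + (0 : ℝ) • w)) :=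
      (continuous_const.add (continuous_id.smul continuous_const)).tendsto 0
    rw [zero_smul, add_zero] at hp
    exact (hp.eventually ((isOpen_setOf_disjoint_segment hclosed q).mem_nhds h)).filter_mono
      nhdsWithin_le_nhds
  obtain ⟨ε, hε, hεcol, hεseg⟩ : ∃ ε : ℝ, 0 < ε ∧
      (∀ u ∈ S, ∀ v ∈ S, u ≠ v → ¬ Collinear ℝ ({p + ε • w, u, v} : Set Pt)) ∧
      ∀ q ∈ S, ∀ u ∈ S, ∀ v ∈ S, Disjoint (segment ℝ p q) (segment ℝ u v) →
        Disjoint (segment ℝ (p + ε • w) q) (segment ℝ u v) := by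
    refine ((eventually_mem_nhdsWithin (a := (0 : ℝ)) (s := Set.Ioi 0)).and
      (Filter.Eventually.and ?_ ?_)).exists
    all_goals simp only [Filter.eventually_all_finset, Filter.eventually_imp_distrib_left]
    exacts [hcol, fun q _ u _ v _ => hseg q u v]
  have hx : ℓ p < ℓ (p + ε • w) := by
    rw [map_add, map_smul, smul_eq_mul, lt_add_iff_pos_right]
    positivity
  exact ⟨p, p + ε • w, hp, fun hxS => (hmax _ hxS).not_gt hx, hS.insert hεcol,
    fun u hu v hv hup hvp => disjoint_segment_of_lt hx.le (hlt u hu hup) (hlt v hv hvp), hεseg⟩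

namespace IsSplicePoint

variable {S : Finset Pt} {p x : Pt}

lemma ne_of_mem (hx : IsSplicePoint S p x) {u : Pt} (hu : u ∈ S) : x ≠ u :=
  fun h => hx.notMem (h ▸ hu)

lemma not_collinear (hx : IsSplicePoint S p x) {u v : Pt} (hu : u ∈ S) (hv : v ∈ S)
    (huv : u ≠ v) : ¬ Collinear ℝ ({u, x, v} : Set Pt) :=
  hx.genPos u (Finset.mem_insert_of_mem hu) x (Finset.mem_insert_self _ _) v
    (Finset.mem_insert_of_mem hv) (hx.ne_of_mem hu).symm huv (hx.ne_of_mem hv)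

lemma meetsProperly_left (hx : IsSplicePoint S p x) (G : PlaneGraph S) {e : Sym2 Pt}
    (he : e ∈ G.edges) : MeetsProperly s(p, x) e := by
  by_cases hpe : p ∈ e
  · obtain ⟨v, rfl⟩ := Sym2.mem_iff_exists.1 hpe
    exact meetsProperly_of_not_collinear (hx.not_collinear hx.mem (G.right_mem he) (G.ne_of_mem he))
  · induction e using Sym2.ind with
    | _ u v =>
    exact meetsProperly_of_disjoint (hx.disjoint_left u (G.left_mem he) v (G.right_mem he)
      (fun h => hpe (h ▸ Sym2.mem_mk_left _ _)) (fun h => hpe (h ▸ Sym2.mem_mk_right _ _)))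

lemma meetsProperly_right (hx : IsSplicePoint S p x) (G : PlaneGraph S) {q o : Pt}
    (hq : s(p, q) ∈ G.edges) (hadj : ∀ e ∈ G.edges, p ∈ e → e = s(p, q) ∨ e = s(p, o))
    (hxo : Disjoint (segment ℝ x q) (segment ℝ p o)) {e : Sym2 Pt} (he : e ∈ G.edges)
    (hne : e ≠ s(p, q)) : MeetsProperly s(x, q) e := by
  by_cases hqe : q ∈ e
  · obtain ⟨v, rfl⟩ := Sym2.mem_iff_exists.1 hqe
    rw [Sym2.eq_swap]
    exact meetsProperly_of_not_collinear
      (hx.not_collinear (G.right_mem hq) (G.right_mem he) (G.ne_of_mem he))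
  by_cases hpe : p ∈ e
  · rcases hadj e he hpe with rfl | rfl
    exacts [absurd rfl hne, meetsProperly_of_disjoint hxo]
  induction e using Sym2.ind with
  | _ u v =>
  refine meetsProperly_of_disjoint
    (hx.disjoint_right q (G.right_mem hq) u (G.left_mem he) v (G.right_mem he) ?_)
  exact MeetsProperly.disjoint (G.noncrossing _ hq _ he hne.symm) hpe hqe

lemma exists_planeGraph_subdivide (hx : IsSplicePoint S p x) {G : PlaneGraph S} {q o : Pt}
    (hq : s(p, q) ∈ G.edges) (hadj : ∀ e ∈ G.edges, p ∈ e → e = s(p, q) ∨ e = s(p, o))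
    (hxo : Disjoint (segment ℝ x q) (segment ℝ p o)) :
    ∃ G' : PlaneGraph (insert x S), G'.edges = subdivide G.edges p q x := by
  have hqS : q ∈ S := G.right_mem hq
  refine ⟨⟨subdivide G.edges p q x, fun e he v hv => ?_, fun e he => ?_, ?_⟩, rfl⟩
  · simp only [subdivide, Finset.mem_insert, Finset.mem_erase] at he
    rcases he with rfl | rfl | ⟨-, he⟩
    · rcases Sym2.mem_iff.1 hv with rfl | rfl
      exacts [Finset.mem_insert_of_mem hx.mem, Finset.mem_insert_self _ _]
    · rcases Sym2.mem_iff.1 hv with rfl | rfl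
      exacts [Finset.mem_insert_self _ _, Finset.mem_insert_of_mem hqS]
    · exact Finset.mem_insert_of_mem (G.endpoint_mem e he v hv)
  · simp only [subdivide, Finset.mem_insert, Finset.mem_erase] at he
    rcases he with rfl | rfl | ⟨-, he⟩
    · exact Sym2.mk_isDiag_iff.not.2 (hx.ne_of_mem hx.mem).symm
    · exact Sym2.mk_isDiag_iff.not.2 (hx.ne_of_mem hqS)
    · exact G.not_isDiag e he
  refine ((NonCrossing.mono G.noncrossing (Finset.erase_subset _ _)).insert ?_).insert ?_
  · exact fun e he _ => hx.meetsProperly_right G hq hadj hxo (Finset.mem_of_mem_erase he)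
      (Finset.ne_of_mem_erase he)
  · intro e he _
    rcases Finset.mem_insert.1 he with rfl | he
    · rw [Sym2.eq_swap]
      refine meetsProperly_of_not_collinear ?_
      rw [Set.insert_comm]
      exact hx.not_collinear hx.mem hqS (G.ne_of_mem hq)
    · exact hx.meetsProperly_left G (Finset.mem_of_mem_erase he)

lemma exists_subdivide (hS : GenPos S) (hx : IsSplicePoint S p x) {C : PlaneGraph S}
    (hC : IsSpanningCycle C) :
    ∃ q, q ≠ p ∧ s(p, q) ∈ C.edges ∧
      ∃ C' : PlaneGraph (insert x S), IsSpanningCycle C' ∧ C'.edges = subdivide C.edges p q x := by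
  obtain ⟨n, g, hg, hrange, hedges⟩ := isSpanningCycle_iff.1 hC
  obtain ⟨a, b, hab, ha, hb, hadj⟩ :=
    exists_adj_of_mem_range hg (hrange ▸ Finset.mem_coe.2 hx.mem)
  rw [← hedges] at ha hb hadj
  have hpab := hS p hx.mem a (C.right_mem ha) b (C.right_mem hb) (C.ne_of_mem ha)
    (C.ne_of_mem hb) hab
  obtain ⟨q, o, hq, hxo, hadj⟩ : ∃ q o, s(p, q) ∈ C.edges ∧
      Disjoint (segment ℝ x q) (segment ℝ p o) ∧
      ∀ e ∈ C.edges, p ∈ e → e = s(p, q) ∨ e = s(p, o) := by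
    rcases disjoint_segment_or_disjoint_segment hpab (hx.ne_of_mem hx.mem) with h | h
    exacts [⟨a, b, ha, h, hadj⟩, ⟨b, a, hb, h, fun e he hpe => (hadj e he hpe).symm⟩]
  obtain ⟨C', hC'⟩ := hx.exists_planeGraph_subdivide hq hadj hxo
  obtain ⟨g', hg', hrange', hedges'⟩ :=
    exists_cycleEdges_eq_subdivide hg (by rw [hrange]; exact hx.notMem) (hedges ▸ hq)
  refine ⟨q, (C.ne_of_mem hq).symm, hq, C', isSpanningCycle_iff.2 ⟨n + 1, g', hg', ?_, ?_⟩, hC'⟩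
  · rw [hrange', hrange, Finset.coe_insert]
  · rw [hC', hedges', hedges]

lemma scCount_le (hS : GenPos S) (hx : IsSplicePoint S p x) :
    scCount S ≤ scCount (insert x S) := by
  choose q hqp hq C' hC' hedges using
    fun C : {C : PlaneGraph S // IsSpanningCycle C} => hx.exists_subdivide hS C.2
  have hxe : ∀ G : PlaneGraph S, ∀ e ∈ G.edges, x ∉ e := fun G e he hxe =>
    hx.notMem (G.endpoint_mem e he x hxe)
  refine Nat.card_le_card_of_injective (fun C => ⟨C' C, hC' C⟩) fun C₁ C₂ h =>
    Subtype.ext (PlaneGraph.ext_edges ?_)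
  refine eq_of_subdivide_eq (hxe _) (hxe _) (hq C₁) (hq C₂) (hqp C₁) ?_
  rw [← hedges, ← hedges]
  exact congrArg (fun C => C.1.edges) h

end IsSplicePoint

lemma exists_scCount_le_scCount_insert {S : Finset Pt} (hS : GenPos S) (hne : S.Nonempty) :
    ∃ x ∉ S, GenPos (insert x S) ∧ scCount S ≤ scCount (insert x S) := by
  obtain ⟨p, x, hx⟩ := exists_isSplicePoint hS hne
  exact ⟨x, hx.notMem, hx.genPos, hx.scCount_le hS⟩

/-- If `sc(S) ≤ A · c^{|S|}` for all even-size point sets in general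
position, then an analogous bound holds for all odd-size point sets. -/
theorem statement7 (c A : ℝ) (hc : 1 < c) (hA : 0 < A)
    (h : ∀ S : Finset Pt, GenPos S → Even S.card →
      (scCount S : ℝ) ≤ A * c ^ S.card) :
    ∃ A' : ℝ, 0 < A' ∧ ∀ S : Finset Pt, GenPos S → Odd S.card →
      (scCount S : ℝ) ≤ A' * c ^ S.card := by
  refine ⟨A * c, by positivity, fun S hS hodd => ?_⟩
  obtain ⟨x, hxS, hgp, hle⟩ := exists_scCount_le_scCount_insert hS (Finset.card_pos.1 hodd.pos)
  have hcard : (insert x S).card = S.card + 1 := Finset.card_insert_of_notMem hxS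
  calc (scCount S : ℝ) ≤ scCount (insert x S) := by exact_mod_cast hle
    _ ≤ A * c ^ (insert x S).card := h _ hgp (hcard ▸ hodd.add_one)
    _ = A * c * c ^ S.card := by rw [hcard, pow_succ]; ring

end
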